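/- The image of φ equals the affine variety V = {(a₁, a₂, a₃, u₁, u₂, u₃) ∈ ℂ⁶ | a₁² + a₂² + a₃² = u₁² + u₂² + u₃² and a₁u₁ + a₂u₂ + a₃u₃ = 0}. -/

import Mathlib

open Matrix Complex

noncomputable section

/-- The matrix of σ(x₁, x₂, y₁, y₂) = (y₁, y₂, x₁, x₂) in coordinates (x₁, x₂, y₁, y₂). -/
def sigmaM : Matrix (Fin 4) (Fin 4) ℂ :=
  !![0, 0, 1, 0; 0, 0, 0, 1; 1, 0, 0, 0; 0, 1, 0, 0]

/-- The matrix of τ(x₁, x₂, y₁, y₂) = (−x₁, −x₂, y₁, y₂). -/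
def tauM : Matrix (Fin 4) (Fin 4) ℂ :=
  !![-1, 0, 0, 0; 0, -1, 0, 0; 0, 0, 1, 0; 0, 0, 0, 1]

lemma sigmaM_mul_sigmaM : sigmaM * sigmaM = 1 := by
  ext i j
  fin_cases i <;> fin_cases j <;>
    simp [sigmaM, Matrix.mul_apply, Fin.sum_univ_four, Matrix.one_apply, Matrix.vecHead, Matrix.vecTail]

lemma tauM_mul_tauM : tauM * tauM = 1 := by
  ext i j
  fin_cases i <;> fin_cases j <;>
    simp [tauM, Matrix.mul_apply, Fin.sum_univ_four, Matrix.one_apply, Matrix.vecHead, Matrix.vecTail]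

/-- σ as an invertible matrix. -/
def sigmaU : (Matrix (Fin 4) (Fin 4) ℂ)ˣ :=
  ⟨sigmaM, sigmaM, sigmaM_mul_sigmaM, sigmaM_mul_sigmaM⟩

/-- τ as an invertible matrix. -/
def tauU : (Matrix (Fin 4) (Fin 4) ℂ)ˣ :=
  ⟨tauM, tauM, tauM_mul_tauM, tauM_mul_tauM⟩

/-- The subgroup H of GL₄(ℂ) generated by σ and τ. -/
def Hgrp : Subgroup (Matrix (Fin 4) (Fin 4) ℂ)ˣ :=
  Subgroup.closure {sigmaU, tauU}

/-- The map φ(x₁, x₂, y₁, y₂) = (a₁, a₂, a₃, u₁, u₂, u₃), where a point of ℂ⁴ is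
a function `p : Fin 4 → ℂ` with x₁ = p 0, x₂ = p 1, y₁ = p 2, y₂ = p 3. -/
def phi (p : Fin 4 → ℂ) : (Fin 3 → ℂ) × (Fin 3 → ℂ) :=
  (![-I * (p 0 ^ 2 + p 2 ^ 2 + p 1 ^ 2 + p 3 ^ 2) / 2,
     (p 0 ^ 2 + p 2 ^ 2 - p 1 ^ 2 - p 3 ^ 2) / 2,
     p 0 * p 1 + p 2 * p 3],
   ![p 0 * p 2 + p 1 * p 3,
     I * (p 0 * p 2 - p 1 * p 3),
     I * (p 0 * p 3 + p 1 * p 2)])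

/-- The involution ν(a, u) = (a, −u). -/
def nuMap (v : (Fin 3 → ℂ) × (Fin 3 → ℂ)) : (Fin 3 → ℂ) × (Fin 3 → ℂ) := (v.1, -v.2)

/-! With w± = a ± i u, the two equations defining V say exactly that w₊ and w₋ are isotropic for
c₀² + c₁² + c₂². Every isotropic vector is N(s, t) = (−i(s² + t²)/2, (s² − t²)/2, s t) for some s, t
(take square roots of c₁ + i c₀ and i c₀ − c₁, then fix the sign of t), and φ(x, y) has
w₊ = N(x − y), w₋ = N(x + y). As x ± y are arbitrary and (a, u) is recovered from w±,
φ maps onto V. -/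

theorem dotProduct_self_add_I_smul {ι : Type*} [Fintype ι] (a u : ι → ℂ) :
    (a + I • u) ⬝ᵥ (a + I • u) = a ⬝ᵥ a - u ⬝ᵥ u + 2 * I * (a ⬝ᵥ u) := by
  simp only [add_dotProduct, dotProduct_add, smul_dotProduct, dotProduct_smul, smul_eq_mul,
    dotProduct_comm u a]
  linear_combination (u ⬝ᵥ u) * I_sq

theorem dotProduct_self_sub_I_smul {ι : Type*} [Fintype ι] (a u : ι → ℂ) :
    (a - I • u) ⬝ᵥ (a - I • u) = a ⬝ᵥ a - u ⬝ᵥ u - 2 * I * (a ⬝ᵥ u) := by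
  simp only [sub_dotProduct, dotProduct_sub, smul_dotProduct, dotProduct_smul, smul_eq_mul,
    dotProduct_comm u a]
  linear_combination (u ⬝ᵥ u) * I_sq

theorem dotProduct_self_add_sub_I_smul_eq_zero_iff {ι : Type*} [Fintype ι] (a u : ι → ℂ) :
    (a + I • u) ⬝ᵥ (a + I • u) = 0 ∧ (a - I • u) ⬝ᵥ (a - I • u) = 0 ↔
      a ⬝ᵥ a = u ⬝ᵥ u ∧ a ⬝ᵥ u = 0 := by
  rw [dotProduct_self_add_I_smul, dotProduct_self_sub_I_smul]
  constructor
  · rintro ⟨hp, hm⟩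
    exact ⟨by linear_combination (hp + hm) / 2,
      by linear_combination (-I / 4) * (hp - hm) + (a ⬝ᵥ u) * I_sq⟩
  · rintro ⟨hn, ho⟩
    exact ⟨by linear_combination hn + 2 * I * ho, by linear_combination hn - 2 * I * ho⟩

theorem eq_of_add_I_smul_eq_of_sub_I_smul_eq {ι : Type*} {a u b w : ι → ℂ}
    (hp : a + I • u = b + I • w) (hm : a - I • u = b - I • w) : a = b ∧ u = w := by
  constructor <;> funext i <;> have hpi := congrFun hp i <;> have hmi := congrFun hm i <;>
    simp only [Pi.add_apply, Pi.sub_apply, Pi.smul_apply, smul_eq_mul] at hpi hmi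
  · linear_combination (hpi + hmi) / 2
  · linear_combination (-I / 2) * (hpi - hmi) + (u i - w i) * I_sq

def nullConeParam (s t : ℂ) : Fin 3 → ℂ := ![-I * (s ^ 2 + t ^ 2) / 2, (s ^ 2 - t ^ 2) / 2, s * t]

theorem nullConeParam_dotProduct_self (s t : ℂ) : nullConeParam s t ⬝ᵥ nullConeParam s t = 0 := by
  simp only [nullConeParam, dotProduct, Fin.sum_univ_three, cons_val_zero, cons_val_one,
    cons_val_two, head_cons, tail_cons]
  linear_combination ((s ^ 2 + t ^ 2) ^ 2 / 4) * I_sq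

theorem exists_nullConeParam_eq {c : Fin 3 → ℂ} (hc : c ⬝ᵥ c = 0) :
    ∃ s t, nullConeParam s t = c := by
  obtain ⟨s, hs⟩ := IsAlgClosed.exists_eq_mul_self (c 1 + I * c 0)
  obtain ⟨t, ht⟩ := IsAlgClosed.exists_eq_mul_self (I * c 0 - c 1)
  have hst : (s * t) ^ 2 = c 2 ^ 2 := by
    simp only [dotProduct, Fin.sum_univ_three] at hc
    linear_combination -(t * t) * hs - (c 1 + I * c 0) * ht - hc + c 0 ^ 2 * I_sq
  have hnull : ∀ t', t' * t' = t * t → s * t' = c 2 → nullConeParam s t' = c := by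
    intro t' ht' hst'
    funext i
    fin_cases i <;>
      simp only [nullConeParam, Fin.zero_eta, Fin.mk_one, Fin.reduceFinMk, Fin.isValue,
        cons_val_zero, cons_val_one, cons_val]
    · linear_combination (I / 2) * (hs + ht - ht') - c 0 * I_sq
    · linear_combination (ht - ht' - hs) / 2
    · exact hst'
  rcases sq_eq_sq_iff_eq_or_eq_neg.mp hst with h | h
  · exact ⟨s, t, hnull t rfl h⟩
  · exact ⟨s, -t, hnull (-t) (neg_mul_neg t t) (by linear_combination -h)⟩

theorem phi_fst_add_I_smul_snd (p : Fin 4 → ℂ) :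
    (phi p).1 + I • (phi p).2 = nullConeParam (p 0 - p 2) (p 1 - p 3) := by
  funext i
  fin_cases i <;>
    simp only [phi, nullConeParam, Pi.add_apply, smul_cons, smul_eq_mul, smul_empty,
      Fin.zero_eta, Fin.mk_one, Fin.reduceFinMk, Fin.isValue, cons_val_zero, cons_val_one, cons_val]
  · ring
  · linear_combination (p 0 * p 2 - p 1 * p 3) * I_sq
  · linear_combination (p 0 * p 3 + p 1 * p 2) * I_sq

theorem phi_fst_sub_I_smul_snd (p : Fin 4 → ℂ) :
    (phi p).1 - I • (phi p).2 = nullConeParam (p 0 + p 2) (p 1 + p 3) := by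
  funext i
  fin_cases i <;>
    simp only [phi, nullConeParam, Pi.sub_apply, smul_cons, smul_eq_mul, smul_empty,
      Fin.zero_eta, Fin.mk_one, Fin.reduceFinMk, Fin.isValue, cons_val_zero, cons_val_one, cons_val]
  · ring
  · linear_combination -(p 0 * p 2 - p 1 * p 3) * I_sq
  · linear_combination -(p 0 * p 3 + p 1 * p 2) * I_sq

theorem stmt15 :
    Set.range phi =
      {v : (Fin 3 → ℂ) × (Fin 3 → ℂ) |
        v.1 0 ^ 2 + v.1 1 ^ 2 + v.1 2 ^ 2 = v.2 0 ^ 2 + v.2 1 ^ 2 + v.2 2 ^ 2 ∧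
        v.1 0 * v.2 0 + v.1 1 * v.2 1 + v.1 2 * v.2 2 = 0} := by
  ext v
  have hV : v.1 0 ^ 2 + v.1 1 ^ 2 + v.1 2 ^ 2 = v.2 0 ^ 2 + v.2 1 ^ 2 + v.2 2 ^ 2 ∧
      v.1 0 * v.2 0 + v.1 1 * v.2 1 + v.1 2 * v.2 2 = 0 ↔
      v.1 ⬝ᵥ v.1 = v.2 ⬝ᵥ v.2 ∧ v.1 ⬝ᵥ v.2 = 0 := by
    simp only [dotProduct, Fin.sum_univ_three, sq]
  rw [Set.mem_ofPred_eq, hV, ← dotProduct_self_add_sub_I_smul_eq_zero_iff]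
  constructor
  · rintro ⟨p, rfl⟩
    rw [phi_fst_add_I_smul_snd, phi_fst_sub_I_smul_snd]
    exact ⟨nullConeParam_dotProduct_self _ _, nullConeParam_dotProduct_self _ _⟩
  · rintro ⟨hplus, hminus⟩
    obtain ⟨s, t, hst⟩ := exists_nullConeParam_eq hplus
    obtain ⟨s', t', hst'⟩ := exists_nullConeParam_eq hminus
    let p : Fin 4 → ℂ := ![(s' + s) / 2, (t' + t) / 2, (s' - s) / 2, (t' - t) / 2]
    have hphi_plus : (phi p).1 + I • (phi p).2 = v.1 + I • v.2 := by
      rw [phi_fst_add_I_smul_snd, ← hst]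
      congr 1 <;> simp only [p, cons_val_zero, cons_val_one, cons_val] <;> ring
    have hphi_minus : (phi p).1 - I • (phi p).2 = v.1 - I • v.2 := by
      rw [phi_fst_sub_I_smul_snd, ← hst']
      congr 1 <;> simp only [p, cons_val_zero, cons_val_one, cons_val] <;> ring
    obtain ⟨ha, hu⟩ := eq_of_add_I_smul_eq_of_sub_I_smul_eq hphi_plus hphi_minus
    exact ⟨p, Prod.ext ha hu⟩
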